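/- arXiv:1909.12051 — 3 statements merged into one kernel-verified Lean document; each statement's English description precedes it below -/
import Mathlib

section
/- Let σᵢ* = r·σⱼ* with r > 1, σⱼ* > 0, N ≥ 3, and let σᵢ, σⱼ both solve σ' = σ^{2-2/N}(σ* - σ) with respective targets σᵢ*, σⱼ* and common initialization σ₀ ∈ (0, σⱼ*). For s ∈ (0,1/4), f ∈ (3/4,1), if σ₀ ≤ s·σⱼ*·((1-f)(r-1)/(1+(1-f)(r-1)))^{N/(N-2)}, then there exists t with σⱼ(t) ≤ s·σⱼ* and σᵢ(t) ≥ f·σᵢ*. -/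
/-!
Write `α = 2 - 2/N > 1`. A solution of `σ' = σ^α (σ* - σ)` started in `(0, σ*)` stays there (both
`σ` and `σ* - σ` are their initial value times the exponential of an integral), hence increases.
The function `u = σ^(1-α)` satisfies `u' = -(α - 1)(σ* - σ)`, so it decreases at a rate between
`(α - 1)(σ* - σ)` and `(α - 1)σ*`. Let `t₁ < t₂` be the times at which `σᵢ` reaches `s σⱼ*` and
`f σᵢ*`. Comparing the two rates turns the hypothesis on `σ₀` into `t₂ ≤ r t₁`. Finally
`t ↦ σⱼ(r t)` solves an equation whose right-hand side lies below that of `σᵢ` wherever the two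
meet, so `σⱼ(t₂) ≤ σⱼ(r t₁) ≤ σᵢ(t₁) = s σⱼ*`.
-/

open Set Real

theorem eq_mul_exp_integral_of_hasDerivAt {f g : ℝ → ℝ} (hg : Continuous g)
    (hf : ∀ t, HasDerivAt f (f t * g t) t) (t : ℝ) :
    f t = f 0 * exp (∫ u in (0 : ℝ)..t, g u) := by
  set G : ℝ → ℝ := fun t => ∫ u in (0 : ℝ)..t, g u
  have hG : ∀ t, HasDerivAt G (g t) t := fun t => (hg.integral_hasStrictDerivAt 0 t).hasDerivAt
  have hderiv : ∀ t, HasDerivAt (fun t => f t * exp (-G t)) 0 t := fun t =>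
    ((hf t).mul (hG t).neg.exp).congr_deriv (by simp only [Pi.neg_apply]; ring)
  have hconst := is_const_of_deriv_eq_zero (fun t => (hderiv t).differentiableAt)
    (fun t => (hderiv t).deriv) t 0
  simp only [G, intervalIntegral.integral_same, neg_zero, exp_zero, mul_one] at hconst
  rw [← hconst, mul_assoc, ← exp_add, neg_add_cancel, exp_zero, mul_one]

theorem pos_of_hasDerivAt_mul {f g : ℝ → ℝ} (hg : Continuous g)
    (hf : ∀ t, HasDerivAt f (f t * g t) t) (h0 : 0 < f 0) (t : ℝ) : 0 < f t := by
  rw [eq_mul_exp_integral_of_hasDerivAt hg hf t]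
  positivity

-- No sign condition on `x`: it is used before the solution is known to be positive.
theorem mul_rpow_sub_one_of_one_le {α : ℝ} (hα : 1 ≤ α) (x : ℝ) : x * x ^ (α - 1) = x ^ α := by
  rcases eq_or_ne x 0 with rfl | hx
  · rw [zero_mul, zero_rpow (by linarith)]
  · rw [rpow_sub_one hx]
    field_simp

def IsFlowSolution (α σs : ℝ) (σ : ℝ → ℝ) : Prop :=
  ∀ t, HasDerivAt σ (σ t ^ α * (σs - σ t)) t

namespace IsFlowSolution

variable {α σs : ℝ} {σ : ℝ → ℝ}

theorem continuous (h : IsFlowSolution α σs σ) : Continuous σ :=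
  continuous_iff_continuousAt.2 fun t => (h t).continuousAt

theorem pos (h : IsFlowSolution α σs σ) (hα : 1 ≤ α) (h0 : 0 < σ 0) (t : ℝ) : 0 < σ t := by
  refine pos_of_hasDerivAt_mul (g := fun t => σ t ^ (α - 1) * (σs - σ t))
    ((h.continuous.rpow_const fun _ => Or.inr (by linarith)).mul
      (continuous_const.sub h.continuous)) (fun t => ?_) h0 t
  convert h t using 1
  rw [← mul_assoc, mul_rpow_sub_one_of_one_le hα]

theorem lt_target (h : IsFlowSolution α σs σ) (hα : 0 ≤ α) (h0 : σ 0 < σs) (t : ℝ) :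
    σ t < σs := by
  refine sub_pos.1 (pos_of_hasDerivAt_mul (f := fun t => σs - σ t) (g := fun t => -σ t ^ α)
    (h.continuous.rpow_const fun _ => Or.inr hα).neg
    (fun t => ((h t).const_sub σs).congr_deriv (by ring)) (sub_pos.2 h0) t)

theorem strictMono (h : IsFlowSolution α σs σ) (hα : 1 ≤ α) (h0 : 0 < σ 0) (h1 : σ 0 < σs) :
    StrictMono σ :=
  strictMono_of_hasDerivAt_pos h fun t =>
    mul_pos (rpow_pos_of_pos (h.pos hα h0 t) α) (sub_pos.2 (h.lt_target (by linarith) h1 t))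

theorem hasDerivAt_rpow_one_sub (h : IsFlowSolution α σs σ) {t : ℝ} (ht : 0 < σ t) :
    HasDerivAt (fun u => σ u ^ (1 - α)) (-((α - 1) * (σs - σ t))) t := by
  convert (h t).rpow_const (p := 1 - α) (Or.inl ht.ne') using 1
  rw [show 1 - α - 1 = -α by ring, rpow_neg ht.le]
  field_simp [(rpow_pos_of_pos ht α).ne']
  ring

theorem rpow_one_sub_sub_bounds (h : IsFlowSolution α σs σ) (hα : 1 ≤ α) (h0 : 0 < σ 0)
    (h1 : σ 0 < σs) {a b : ℝ} (hab : a < b) :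
    (α - 1) * (σs - σ b) * (b - a) ≤ σ a ^ (1 - α) - σ b ^ (1 - α) ∧
      σ a ^ (1 - α) - σ b ^ (1 - α) ≤ (α - 1) * σs * (b - a) := by
  have hu := fun u => h.hasDerivAt_rpow_one_sub (h.pos hα h0 u)
  obtain ⟨ξ, hξ, hslope⟩ := exists_hasDerivAt_eq_slope _ _ hab
    (fun u _ => (hu u).continuousAt.continuousWithinAt) (fun u _ => hu u)
  have hdiff : σ a ^ (1 - α) - σ b ^ (1 - α) = (α - 1) * (σs - σ ξ) * (b - a) := by
    rw [eq_div_iff (sub_ne_zero.2 hab.ne')] at hslope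
    linarith
  have hξb : σ ξ < σ b := h.strictMono hα h0 h1 hξ.2
  have hξ0 := h.pos hα h0 ξ
  have hα' : 0 ≤ α - 1 := by linarith
  have hba : 0 ≤ b - a := by linarith
  rw [hdiff]
  exact ⟨by gcongr, by gcongr; linarith⟩

theorem exists_time_eq (h : IsFlowSolution α σs σ) (hα : 1 < α) (h0 : 0 < σ 0) {c : ℝ}
    (hc0 : σ 0 ≤ c) (hcs : c < σs) : ∃ t, 0 ≤ t ∧ σ t = c := by
  have hk : 0 < (α - 1) * (σs - c) := mul_pos (by linarith) (by linarith)
  set T := σ 0 ^ (1 - α) / ((α - 1) * (σs - c))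
  have hT : 0 < T := div_pos (rpow_pos_of_pos h0 _) hk
  -- By time `T`, a solution staying below `c` would have pushed `σ ^ (1 - α)` below zero.
  have hcT : c ≤ σ T := by
    by_contra! hlt
    have hbound := (h.rpow_one_sub_sub_bounds hα.le h0 (hc0.trans_lt hcs) hT).1
    have hTeq : (α - 1) * (σs - c) * T = σ 0 ^ (1 - α) := mul_div_cancel₀ _ hk.ne'
    have hslow : (α - 1) * (σs - c) * T < (α - 1) * (σs - σ T) * T := by gcongr
    have := rpow_pos_of_pos (h.pos hα.le h0 T) (1 - α)
    linarith
  obtain ⟨t, ht, hσt⟩ := intermediate_value_Icc hT.le h.continuous.continuousOn ⟨hc0, hcT⟩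
  exact ⟨t, ht.1, hσt⟩

theorem apply_mul_le {τ : ℝ → ℝ} {r : ℝ} (h : IsFlowSolution α σs σ)
    (hτ : IsFlowSolution α (r * σs) τ) (hr : 1 < r) (hτpos : ∀ t, 0 < τ t) (h0 : σ 0 = τ 0)
    {t : ℝ} (ht : 0 ≤ t) : σ (r * t) ≤ τ t := by
  have hσr : ∀ u, HasDerivAt (fun u => σ (r * u)) (r * (σ (r * u) ^ α * (σs - σ (r * u)))) u :=
    fun u => ((h (r * u)).comp u ((hasDerivAt_id u).const_mul r)).congr_deriv (by ring)
  refine image_le_of_deriv_right_lt_deriv_boundary' (f := fun u => σ (r * u)) (B := τ)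
    (h.continuous.comp (continuous_const.mul continuous_id)).continuousOn
    (fun u _ => (hσr u).hasDerivWithinAt) (by simp [h0]) hτ.continuous.continuousOn
    (fun u _ => (hτ u).hasDerivWithinAt) (fun u _ hu => ?_) ⟨ht, le_rfl⟩
  rw [hu]
  have hτu := hτpos u
  have := rpow_pos_of_pos hτu α
  nlinarith [mul_pos this (mul_pos (sub_pos.2 hr) hτu)]

theorem le_mul_of_rpow_one_sub_le (h : IsFlowSolution α σs σ) (hα : 1 < α) (h0 : 0 < σ 0)
    (h1 : σ 0 < σs) {f r t₁ t₂ : ℝ} (hf : f < 1) (hr : 1 ≤ r) (ht₁ : 0 < t₁) (ht₁₂ : t₁ < t₂)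
    (ht₂ : σ t₂ = f * σs)
    (hK : σ t₁ ^ (1 - α) ≤ (1 - f) * (r - 1) * (σ 0 ^ (1 - α) - σ t₁ ^ (1 - α))) :
    t₂ ≤ r * t₁ := by
  have hc : 0 < (α - 1) * (1 - f) * σs :=
    mul_pos (mul_pos (sub_pos.2 hα) (sub_pos.2 hf)) (h0.trans h1)
  have hfast := (h.rpow_one_sub_sub_bounds hα.le h0 h1 ht₁).2
  have hslow := (h.rpow_one_sub_sub_bounds hα.le h0 h1 ht₁₂).1
  have hu₂ := rpow_pos_of_pos (h.pos hα.le h0 t₂) (1 - α)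
  have hKnn : 0 ≤ (1 - f) * (r - 1) := mul_nonneg (by linarith) (by linarith)
  have key : (α - 1) * (1 - f) * σs * (t₂ - t₁) ≤ (α - 1) * (1 - f) * σs * ((r - 1) * t₁) :=
    calc (α - 1) * (1 - f) * σs * (t₂ - t₁) = (α - 1) * (σs - σ t₂) * (t₂ - t₁) := by
          rw [ht₂]; ring
      _ ≤ σ t₁ ^ (1 - α) := by linarith
      _ ≤ (1 - f) * (r - 1) * (σ 0 ^ (1 - α) - σ t₁ ^ (1 - α)) := hK
      _ ≤ (1 - f) * (r - 1) * ((α - 1) * σs * (t₁ - 0)) := by gcongr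
      _ = (α - 1) * (1 - f) * σs * ((r - 1) * t₁) := by ring
  linarith [le_of_mul_le_mul_left key hc]

end IsFlowSolution

theorem lt_and_rpow_one_sub_le_of_le_mul_rpow {α x y K : ℝ} (hα : 1 < α) (hx : 0 < x)
    (hy : 0 < y) (hK : 0 < K) (h : x ≤ y * (K / (1 + K)) ^ (α - 1)⁻¹) :
    x < y ∧ y ^ (1 - α) ≤ K * (x ^ (1 - α) - y ^ (1 - α)) := by
  set ρ := K / (1 + K)
  have hρ : 0 < ρ := by positivity
  have hρ1 : ρ < 1 := (div_lt_one (by positivity)).2 (by linarith)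
  have hρe : 0 < ρ ^ (α - 1)⁻¹ := by positivity
  refine ⟨h.trans_lt (mul_lt_of_lt_one_right hy (rpow_lt_one hρ.le hρ1 (by simpa using hα))), ?_⟩
  have hpow : (y * ρ ^ (α - 1)⁻¹) ^ (1 - α) = y ^ (1 - α) / ρ := by
    rw [mul_rpow hy.le hρe.le, ← rpow_mul hρ.le,
      show (α - 1)⁻¹ * (1 - α) = -1 by field_simp [(sub_pos.2 hα).ne']; ring,
      rpow_neg_one, div_eq_mul_inv]
  have hmono := rpow_le_rpow_of_nonpos (z := 1 - α) hx h (by linarith)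
  rw [hpow, div_le_iff₀ hρ] at hmono
  simp only [ρ] at hmono
  rw [mul_div_assoc', le_div_iff₀ (by positivity)] at hmono
  linarith

theorem stmt_6 (N : ℕ) (hN : 3 ≤ N) (r σjs σis σ0 s f : ℝ)
    (hr : 1 < r) (hσjs : 0 < σjs) (his : σis = r * σjs)
    (hσ0 : 0 < σ0) (hσ0j : σ0 < σjs)
    (hs : s ∈ Set.Ioo (0 : ℝ) (1/4)) (hf : f ∈ Set.Ioo (3/4 : ℝ) 1)
    (σi σj : ℝ → ℝ)
    (hodei : ∀ t : ℝ, HasDerivAt σi (σi t ^ (2 - 2 / (N : ℝ)) * (σis - σi t)) t)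
    (hodej : ∀ t : ℝ, HasDerivAt σj (σj t ^ (2 - 2 / (N : ℝ)) * (σjs - σj t)) t)
    (hiniti : σi 0 = σ0) (hinitj : σj 0 = σ0)
    (hcond : σ0 ≤ s * σjs *
      ((1 - f) * (r - 1) / (1 + (1 - f) * (r - 1))) ^ ((N : ℝ) / ((N : ℝ) - 2))) :
    ∃ t : ℝ, 0 ≤ t ∧ σj t ≤ s * σjs ∧ f * σis ≤ σi t := by
  subst his
  obtain ⟨hs0, hs4⟩ := hs
  obtain ⟨hf3, hf1⟩ := hf
  set α : ℝ := 2 - 2 / (N : ℝ) with hα_def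
  have hN' : (3 : ℝ) ≤ N := by exact_mod_cast hN
  have hα : 1 < α := by
    have : 2 / (N : ℝ) < 1 := (div_lt_one (by linarith)).2 (by linarith)
    linarith
  have hexp : (N : ℝ) / ((N : ℝ) - 2) = (α - 1)⁻¹ := by
    rw [hα_def]
    field_simp
    ring
  have hi : IsFlowSolution α (r * σjs) σi := hodei
  have hj : IsFlowSolution α σjs σj := hodej
  rw [← hiniti] at hσ0 hσ0j hinitj hcond
  rw [hexp] at hcond
  obtain ⟨hσ0s, hcondK⟩ := lt_and_rpow_one_sub_le_of_le_mul_rpow hα hσ0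
    (mul_pos hs0 hσjs) (mul_pos (by linarith) (by linarith)) hcond
  have h1i : σi 0 < r * σjs := by nlinarith
  have hmonoi := hi.strictMono hα.le hσ0 h1i
  obtain ⟨t₁, -, hσt₁⟩ := hi.exists_time_eq hα hσ0 hσ0s.le (by nlinarith)
  obtain ⟨t₂, -, hσt₂⟩ :=
    hi.exists_time_eq hα hσ0 (c := f * (r * σjs)) (by nlinarith) (by nlinarith)
  have ht₁ : 0 < t₁ := hmonoi.lt_iff_lt.1 (hσt₁ ▸ hσ0s)
  have ht₁₂ : t₁ < t₂ := hmonoi.lt_iff_lt.1 (by rw [hσt₁, hσt₂]; nlinarith)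
  rw [← hσt₁] at hcondK
  have ht₂₁ := hi.le_mul_of_rpow_one_sub_le hα hσ0 h1i hf1 hr.le ht₁ ht₁₂ hσt₂ hcondK
  refine ⟨t₂, by linarith, ?_, hσt₂.ge⟩
  calc σj t₂ ≤ σj (r * t₁) :=
        (hj.strictMono hα.le (hinitj ▸ hσ0) (hinitj ▸ hσ0j)).monotone ht₂₁
    _ ≤ σi t₁ := hj.apply_mul_le hi hr (hi.pos hα.le hσ0) hinitj ht₁.le
    _ = s * σjs := hσt₁
end

section
/- For every real r with 0 ≤ r ≤ 1 and integer N ≥ 2, r·exp(r^{1-2/N}·(1-r)) ≤ 1. -/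
open Real

lemma mul_exp_one_sub_le_one (r : ℝ) : r * exp (1 - r) ≤ 1 :=
  calc r * exp (1 - r) ≤ exp (r - 1) * exp (1 - r) := by
        gcongr
        linarith [add_one_le_exp (r - 1)]
    _ = 1 := by rw [← exp_add, sub_add_sub_cancel, sub_self, exp_zero]

lemma mul_exp_rpow_mul_one_sub_le_one {a r : ℝ} (ha : 0 ≤ a) (h0 : 0 ≤ r) (h1 : r ≤ 1) :
    r * exp (r ^ a * (1 - r)) ≤ 1 :=
  calc r * exp (r ^ a * (1 - r)) ≤ r * exp (1 - r) := by
        gcongr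
        exact mul_le_of_le_one_left (sub_nonneg.2 h1) (rpow_le_one h0 h1 ha)
    _ ≤ 1 := mul_exp_one_sub_le_one r

theorem stmt_10 (N : ℕ) (hN : 2 ≤ N) (r : ℝ) (h0 : 0 ≤ r) (h1 : r ≤ 1) :
    r * Real.exp (r ^ (1 - 2 / (N : ℝ)) * (1 - r)) ≤ 1 := by
  have hexponent : 0 ≤ 1 - 2 / (N : ℝ) := by
    rw [sub_nonneg, div_le_one (by positivity)]
    exact_mod_cast hN
  exact mul_exp_rpow_mul_one_sub_le_one hexponent h0 h1
end

section
/- Let W(t) be a d×d matrix evolving by Ẇ = (1/2)·W(W*ᵀW* - WᵀW), with W(0)ᵀW(0) = σ₀·I for σ₀ > 0. Then WᵀW satisfies d/dt(WᵀW) = (1/2)[(WᵀW)(W*ᵀW* - WᵀW) + (W*ᵀW* - WᵀW)(WᵀW)], WᵀW and W*ᵀW* remain simultaneously diagonalizable for all t, and each eigenvalue σᵢ of WᵀW satisfies σᵢ' = σᵢ(σᵢ* - σᵢ), where σᵢ* are the eigenvalues of W*ᵀW*. -/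
/-!
With `G = WᵀW` and `A = W*ᵀW*`, the flow closes up into the matrix Riccati equation
`Ġ = ½ (G (A - G) + (A - G) G)`, whose right-hand side commutes with orthogonal conjugation.
Conjugating by an orthogonal `U` that diagonalises `A` gives the same equation for `M = U G Uᵀ`
with diagonal `D = U A Uᵀ`. A diagonal sign matrix `P` fixes `D` and the initial value `σ₀ I`,
so `P M Pᵀ` solves the same locally Lipschitz ODE with the same initial value, hence equals `M`;
taking `P` to flip a single coordinate kills the off-diagonal entries of `M(t)`. On the diagonal
the equation then reads `σᵢ' = σᵢ (σᵢ* - σᵢ)`.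
-/

open Matrix Set Topology

-- Any norm on matrices would do: only the topology and local Lipschitz continuity are used.
attribute [local instance] Matrix.normedAddCommGroup Matrix.normedSpace

theorem ODE_solution_unique_of_locallyLipschitz {E : Type*} [NormedAddCommGroup E]
    [NormedSpace ℝ E] {v : E → E} (hv : LocallyLipschitz v) {f g : ℝ → E} {t₀ : ℝ}
    (hf : ∀ t, HasDerivAt f (v (f t)) t) (hg : ∀ t, HasDerivAt g (v (g t)) t)
    (heq : f t₀ = g t₀) : f = g := by
  have hfc : Continuous f := continuous_iff_continuousAt.2 fun t => (hf t).continuousAt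
  have hgc : Continuous g := continuous_iff_continuousAt.2 fun t => (hg t).continuousAt
  have hopen : IsOpen {t | f t = g t} := by
    refine isOpen_iff_mem_nhds.2 fun t₁ (h₁ : f t₁ = g t₁) => ?_
    obtain ⟨K, s, hs, hK⟩ := hv (f t₁)
    have hfs : ∀ᶠ t in 𝓝 t₁, f t ∈ s := hfc.continuousAt hs
    have hgs : ∀ᶠ t in 𝓝 t₁, g t ∈ s := hgc.continuousAt (h₁ ▸ hs)
    exact ODE_solution_unique_of_eventually (v := fun _ => v) (s := fun _ => s)
      (.of_forall fun _ => hK) (hfs.mono fun t h => ⟨hf t, h⟩) (hgs.mono fun t h => ⟨hg t, h⟩) h₁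
  have hclopen : IsClopen {t | f t = g t} := ⟨isClosed_eq hfc hgc, hopen⟩
  funext t
  exact eq_univ_iff_forall.1 (hclopen.eq_univ ⟨t₀, heq⟩) t

theorem Matrix.hasDerivAt_iff_apply {m n : Type*} [Fintype n] {M : ℝ → Matrix m n ℝ}
    {M' : Matrix m n ℝ} {t : ℝ} :
    HasDerivAt M M' t ↔ ∀ i j, HasDerivAt (fun s => M s i j) (M' i j) t :=
  hasDerivAt_pi.trans (forall_congr' fun _ => hasDerivAt_pi)

theorem HasDerivAt.matrix_mul {m n p : Type*} [Fintype n] [Fintype p] {A : ℝ → Matrix m n ℝ}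
    {B : ℝ → Matrix n p ℝ} {A' : Matrix m n ℝ} {B' : Matrix n p ℝ} {t : ℝ}
    (hA : HasDerivAt A A' t) (hB : HasDerivAt B B' t) :
    HasDerivAt (fun s => A s * B s) (A' * B t + A t * B') t := by
  rw [hasDerivAt_iff_apply] at *
  intro i j
  simp only [mul_apply, Matrix.add_apply, ← Finset.sum_add_distrib]
  exact HasDerivAt.fun_sum fun k _ => (hA i k).fun_mul (hB k j)

theorem HasDerivAt.matrix_transpose {m n : Type*} [Fintype m] [Fintype n] {A : ℝ → Matrix m n ℝ}
    {A' : Matrix m n ℝ} {t : ℝ} (hA : HasDerivAt A A' t) :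
    HasDerivAt (fun s => (A s)ᵀ) A'ᵀ t :=
  hasDerivAt_iff_apply.2 fun i j => hasDerivAt_iff_apply.1 hA j i

theorem HasDerivAt.matrix_conj {m n : Type*} [Fintype m] [Fintype n] {M : ℝ → Matrix n n ℝ}
    {M' : Matrix n n ℝ} {t : ℝ} (hM : HasDerivAt M M' t) (U : Matrix m n ℝ) :
    HasDerivAt (fun s => U * M s * Uᵀ) (U * M' * Uᵀ) t := by
  simpa using ((hasDerivAt_const t U).matrix_mul hM).matrix_mul (hasDerivAt_const t Uᵀ)

theorem ContDiff.matrix_mul {m n p E : Type*} [Fintype m] [Fintype n] [Fintype p]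
    [NormedAddCommGroup E] [NormedSpace ℝ E]
    {A : E → Matrix m n ℝ} {B : E → Matrix n p ℝ} {k : WithTop ℕ∞} (hA : ContDiff ℝ k A)
    (hB : ContDiff ℝ k B) : ContDiff ℝ k fun x => A x * B x := by
  refine contDiff_pi.2 fun i => contDiff_pi.2 fun j => ?_
  simp only [mul_apply]
  exact ContDiff.sum fun l _ =>
    (contDiff_pi.1 (contDiff_pi.1 hA i) l).mul (contDiff_pi.1 (contDiff_pi.1 hB l) j)

namespace Matrix

variable {n : Type*} [Fintype n] [DecidableEq n]

noncomputable def gramVectorField (A G : Matrix n n ℝ) : Matrix n n ℝ :=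
  (1 / 2 : ℝ) • (G * (A - G) + (A - G) * G)

omit [DecidableEq n] in
theorem contDiff_gramVectorField (A : Matrix n n ℝ) : ContDiff ℝ 1 (gramVectorField A) := by
  show ContDiff ℝ 1 fun G : Matrix n n ℝ => (1 / 2 : ℝ) • (G * (A - G) + (A - G) * G)
  have hsub : ContDiff ℝ 1 fun G : Matrix n n ℝ => A - G := contDiff_const.sub contDiff_id
  exact (contDiff_const (c := (1 / 2 : ℝ))).smul
    ((contDiff_id.matrix_mul hsub).add (hsub.matrix_mul contDiff_id))

omit [DecidableEq n] in
theorem hasDerivAt_transpose_mul_self {m : Type*} [Fintype m] {W : ℝ → Matrix m n ℝ}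
    {A : Matrix n n ℝ} (hA : A.IsSymm) {t : ℝ}
    (hW : HasDerivAt W ((1 / 2 : ℝ) • (W t * (A - (W t)ᵀ * W t))) t) :
    HasDerivAt (fun s => (W s)ᵀ * W s) (gramVectorField A ((W t)ᵀ * W t)) t := by
  convert hW.matrix_transpose.matrix_mul hW using 1
  simp only [gramVectorField, transpose_smul, transpose_mul, transpose_sub, hA.eq,
    transpose_transpose, smul_mul, Matrix.mul_smul, Matrix.mul_assoc, smul_add, add_comm]

theorem conj_gramVectorField {U : Matrix n n ℝ} (hU : Uᵀ * U = 1) (A G : Matrix n n ℝ) :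
    U * gramVectorField A G * Uᵀ = gramVectorField (U * A * Uᵀ) (U * G * Uᵀ) := by
  have hmul (X Y : Matrix n n ℝ) : U * (X * Y) * Uᵀ = U * X * Uᵀ * (U * Y * Uᵀ) := by
    rw [show U * X * Uᵀ * (U * Y * Uᵀ) = U * X * (Uᵀ * U) * Y * Uᵀ by simp only [Matrix.mul_assoc],
      hU, Matrix.mul_one, Matrix.mul_assoc U X]
  simp only [gramVectorField, Matrix.mul_smul, Matrix.smul_mul, Matrix.mul_add, Matrix.add_mul,
    hmul, Matrix.mul_sub, Matrix.sub_mul]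

theorem gramVectorField_apply_self {A G : Matrix n n ℝ} (hA : A.IsDiag)
    (hG : G.IsDiag) (i : n) : gramVectorField A G i i = G i i * (A i i - G i i) := by
  rw [← hA.diagonal_diag, ← hG.diagonal_diag]
  simp only [gramVectorField, one_div, diagonal_sub, diag_apply, diagonal_mul_diagonal,
    diagonal_add, smul_apply, diagonal_apply_eq, smul_eq_mul]
  ring

theorem isDiag_of_forall_diagonal_conj_eq {M : Matrix n n ℝ}
    (h : ∀ s : n → ℝ, (∀ k, s k * s k = 1) → diagonal s * M * diagonal s = M) : M.IsDiag := by
  intro i j hij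
  have := congr_fun₂ (h (fun k => if k = i then -1 else 1) fun k => by split_ifs <;> norm_num) i j
  simp only [mul_diagonal, diagonal_mul, ↓reduceIte, neg_mul, one_mul, Ne.symm hij, mul_one] at this
  linarith

theorem isDiag_of_hasDerivAt_gramVectorField {D : Matrix n n ℝ} (hD : D.IsDiag)
    {M : ℝ → Matrix n n ℝ} (hM : ∀ t, HasDerivAt M (gramVectorField D (M t)) t)
    (h₀ : (M 0).IsDiag) (t : ℝ) : (M t).IsDiag := by
  refine isDiag_of_forall_diagonal_conj_eq fun s hs => ?_
  have hP : (diagonal s)ᵀ * diagonal s = 1 := by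
    simp [diagonal_transpose, diagonal_mul_diagonal, hs]
  have hconj : ∀ X : Matrix n n ℝ, X.IsDiag → diagonal s * X * (diagonal s)ᵀ = X := fun X hX => by
    rw [← hX.diagonal_diag]
    simp only [diagonal_transpose, diagonal_mul_diagonal]
    congr 1
    funext k
    rw [mul_right_comm, hs, one_mul]
  have hflip : (fun t => diagonal s * M t * (diagonal s)ᵀ) = M := by
    refine ODE_solution_unique_of_locallyLipschitz (contDiff_gramVectorField D).locallyLipschitz
      (fun t => ?_) hM (hconj _ h₀)
    rw [← hconj D hD, ← conj_gramVectorField hP]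
    exact (hM t).matrix_conj _
  simpa [diagonal_transpose] using congr_fun hflip t

theorem IsSymm.exists_orthogonal_conj_isDiag {A : Matrix n n ℝ} (hA : A.IsSymm) :
    ∃ U : Matrix n n ℝ, U * Uᵀ = 1 ∧ Uᵀ * U = 1 ∧ (U * A * Uᵀ).IsDiag := by
  have h := (isHermitian_iff_isSelfAdjoint.mpr hA).conjStarAlgAut_star_eigenvectorUnitary
  rw [Unitary.conjStarAlgAut_apply] at h
  generalize (star _ : unitaryGroup n ℝ) = U at h
  have hstar : star (U : Matrix n n ℝ) = (U : Matrix n n ℝ)ᵀ := by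
    rw [star_eq_conjTranspose, conjTranspose_eq_transpose_of_trivial]
  refine ⟨U, hstar ▸ Unitary.coe_mul_star_self U, hstar ▸ Unitary.coe_star_mul_self U, ?_⟩
  rw [← hstar, h]
  exact isDiag_diagonal _

end Matrix

theorem stmt_16_general (d : ℕ) (σ0 : ℝ)
    (W : ℝ → Matrix (Fin d) (Fin d) ℝ) (Wstar : Matrix (Fin d) (Fin d) ℝ)
    (hflow : ∀ (t : ℝ) (i j : Fin d),
      HasDerivAt (fun s => W s i j)
        (((1 / 2 : ℝ) • (W t * (Wstarᵀ * Wstar - (W t)ᵀ * W t))) i j) t)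
    (hinit : (W 0)ᵀ * W 0 = σ0 • (1 : Matrix (Fin d) (Fin d) ℝ)) :
    (∀ (t : ℝ) (i j : Fin d),
      HasDerivAt (fun s => ((W s)ᵀ * W s) i j)
        (((1 / 2 : ℝ) •
          (((W t)ᵀ * W t) * (Wstarᵀ * Wstar - (W t)ᵀ * W t) +
            (Wstarᵀ * Wstar - (W t)ᵀ * W t) * ((W t)ᵀ * W t))) i j) t) ∧
    ∃ U : Matrix (Fin d) (Fin d) ℝ, U * Uᵀ = 1 ∧
      (U * (Wstarᵀ * Wstar) * Uᵀ).IsDiag ∧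
      (∀ t : ℝ, (U * ((W t)ᵀ * W t) * Uᵀ).IsDiag) ∧
      (∀ (i : Fin d) (t : ℝ),
        HasDerivAt (fun s => (U * ((W s)ᵀ * W s) * Uᵀ) i i)
          ((U * ((W t)ᵀ * W t) * Uᵀ) i i *
            ((U * (Wstarᵀ * Wstar) * Uᵀ) i i - (U * ((W t)ᵀ * W t) * Uᵀ) i i)) t) := by
  have hA : (Wstarᵀ * Wstar).IsSymm := isSymm_transpose_mul_self Wstar
  have hG (t : ℝ) : HasDerivAt (fun s => (W s)ᵀ * W s)
      (gramVectorField (Wstarᵀ * Wstar) ((W t)ᵀ * W t)) t :=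
    hasDerivAt_transpose_mul_self hA (hasDerivAt_iff_apply.2 (hflow t))
  refine ⟨fun t => hasDerivAt_iff_apply.1 (hG t), ?_⟩
  obtain ⟨U, hUUt, hUtU, hD⟩ := hA.exists_orthogonal_conj_isDiag
  set M := fun t => U * ((W t)ᵀ * W t) * Uᵀ
  have hM (t : ℝ) : HasDerivAt M (gramVectorField (U * (Wstarᵀ * Wstar) * Uᵀ) (M t)) t :=
    conj_gramVectorField hUtU _ _ ▸ (hG t).matrix_conj U
  have hM₀ : (M 0).IsDiag := by
    simp only [M, hinit, Matrix.mul_smul, Matrix.smul_mul, Matrix.mul_one, hUUt]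
    exact isDiag_smul_one _ σ0
  have hdiag := isDiag_of_hasDerivAt_gramVectorField hD hM hM₀
  refine ⟨U, hUUt, hD, hdiag, fun i t => ?_⟩
  rw [← gramVectorField_apply_self hD (hdiag t)]
  exact hasDerivAt_iff_apply.1 (hM t) i i

theorem stmt_16 (d : ℕ) (σ0 : ℝ) (hσ0 : 0 < σ0)
    (W : ℝ → Matrix (Fin d) (Fin d) ℝ) (Wstar : Matrix (Fin d) (Fin d) ℝ)
    (hflow : ∀ (t : ℝ) (i j : Fin d),
      HasDerivAt (fun s => W s i j)
        (((1 / 2 : ℝ) • (W t * (Wstarᵀ * Wstar - (W t)ᵀ * W t))) i j) t)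
    (hinit : (W 0)ᵀ * W 0 = σ0 • (1 : Matrix (Fin d) (Fin d) ℝ)) :
    (∀ (t : ℝ) (i j : Fin d),
      HasDerivAt (fun s => ((W s)ᵀ * W s) i j)
        (((1 / 2 : ℝ) •
          (((W t)ᵀ * W t) * (Wstarᵀ * Wstar - (W t)ᵀ * W t) +
            (Wstarᵀ * Wstar - (W t)ᵀ * W t) * ((W t)ᵀ * W t))) i j) t) ∧
    ∃ U : Matrix (Fin d) (Fin d) ℝ, U * Uᵀ = 1 ∧
      (U * (Wstarᵀ * Wstar) * Uᵀ).IsDiag ∧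
      (∀ t : ℝ, (U * ((W t)ᵀ * W t) * Uᵀ).IsDiag) ∧
      (∀ (i : Fin d) (t : ℝ),
        HasDerivAt (fun s => (U * ((W s)ᵀ * W s) * Uᵀ) i i)
          ((U * ((W t)ᵀ * W t) * Uᵀ) i i *
            ((U * (Wstarᵀ * Wstar) * Uᵀ) i i - (U * ((W t)ᵀ * W t) * Uᵀ) i i)) t) :=
  stmt_16_general d σ0 W Wstar hflow hinit
end
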